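/- Let n ≥ 1 and let q ≥ 2 be an integer. For every partition λ of n with λ ≠ (1,1,…,1), the quantity D⁻_λ(q) = |(−q)^{a(λ)} · Π_{i=1}^n ((−q)^i − 1) / Π_{(i,j)∈λ} ((−q)^{h_{i,j}} − 1)| satisfies D⁻_λ(q) < q^{n(n−1)/2}. Equivalently, any unipotent character of GU_n(q) other than the Steinberg character has smaller degree than the Steinberg character. -/

import Mathlib

open scoped Classical

/-- The hook length of a cell `c` in a Young diagram `Y`: the number of cells `(i',j')` of `Y`
with `i' ≥ i`, `j' ≥ j` and `i' = i` or `j' = j`, where `c = (i,j)` (0-indexed). -/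
def hookLength (Y : YoungDiagram) (c : ℕ × ℕ) : ℕ :=
  (Y.cells.filter fun d => c.1 ≤ d.1 ∧ c.2 ≤ d.2 ∧ (d.1 = c.1 ∨ d.2 = c.2)).card

/-- The statistic `a(λ) = ∑ᵢ (i-1)·aᵢ` of a partition (rows of the diagram are 0-indexed,
so this is the sum of the row indices of all cells). -/
def aStat (Y : YoungDiagram) : ℕ := ∑ c ∈ Y.cells, c.1

/-- The degree `D_λ(q)` of the unipotent character of `GL_n(q)` indexed by the partition `λ`
(quantized hook formula). -/
noncomputable def Dq (Y : YoungDiagram) (q : ℝ) : ℝ :=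
  q ^ aStat Y * (∏ i ∈ Finset.range Y.card, (q ^ (i + 1) - 1)) /
    ∏ c ∈ Y.cells, (q ^ hookLength Y c - 1)

/-- The degree `D⁻_λ(q)` of the unipotent character of `GU_n(q)` indexed by the partition `λ`,
obtained from the quantized hook formula by replacing `q` with `-q` and adjusting the sign. -/
noncomputable def Dqminus (Y : YoungDiagram) (q : ℝ) : ℝ :=
  |(-q) ^ aStat Y * (∏ i ∈ Finset.range Y.card, ((-q) ^ (i + 1) - 1)) /
    ∏ c ∈ Y.cells, ((-q) ^ hookLength Y c - 1)|

/-!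
Clearing denominators, `D⁻_λ(q) ≤ q^(n(n-1)/2)` becomes a product inequality that can be checked
one column at a time. Deleting the first column (of length `r`) from a diagram with `n = r + s`
cells lowers `a(λ)` by `r(r-1)/2` and `n(n-1)/2` by `r(r-1)/2 + rs`, keeps the hook lengths of the
other cells, and removes the `r` distinct first-column hook lengths `β_i`. So it suffices that
`∏_{i<r} |(-q)^(s+1+i) - 1| ≤ q^(rs) ∏_{i<r} |(-q)^(β_i) - 1|`, with equality for a single column.
With `|(-q)^k - 1| = q^k (1 - (-1/q)^k)`, the left side is at most `(5/4) q^(rs + r(r+1)/2)`,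
because its correction factors alternate around `1`. For `s ≥ 1` we have `∑ β_i > r(r+1)/2`, and
distinct exponents keep the product of the correction factors on the right above `2/3`. Since
`q ≥ 2`, `5/4 < q · 2/3`, so the inequality is strict for every diagram other than a column.
-/

open Finset

section NegPowFactors

variable {x : ℝ}

theorem one_sub_neg_pow_nonneg (hx0 : 0 ≤ x) (hx1 : x ≤ 1) (k : ℕ) : 0 ≤ 1 - (-x) ^ k := by
  have : |(-x) ^ k| ≤ 1 := by
    rw [abs_pow, abs_neg, abs_of_nonneg hx0]
    exact pow_le_one₀ hx0 hx1
  linarith [le_abs_self ((-x) ^ k)]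

/-- The factors alternate between `1 + x^k` (odd `k`) and `1 - x^k` (even `k`); an even factor
followed by an odd one has product at most `1`. -/
theorem prod_range_one_sub_neg_pow_le_max (hx0 : 0 ≤ x) (hx1 : x ≤ 1) (m r : ℕ) :
    ∏ i ∈ range r, (1 - (-x) ^ (m + i)) ≤ max 1 (1 - (-x) ^ m) := by
  induction r generalizing m with
  | zero => simp
  | succ r ih =>
    rw [prod_range_succ']
    have hrest := ih (m + 1)
    simp only [add_zero, ← add_assoc, add_right_comm m _ 1] at hrest ⊢
    have hxm : x ^ (m + 1) ≤ x ^ m := pow_le_pow_of_le_one hx0 hx1 m.le_succ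
    have hxm0 : 0 ≤ x ^ (m + 1) := pow_nonneg hx0 _
    rcases Nat.even_or_odd m with hm | hm
    · rw [hm.neg_pow]
      rw [(hm.add_one).neg_pow, sub_neg_eq_add, max_eq_right (by linarith)] at hrest
      have h1 : 0 ≤ 1 - x ^ m := by linarith [pow_le_one₀ (n := m) hx0 hx1]
      calc (∏ i ∈ range r, (1 - (-x) ^ (m + 1 + i))) * (1 - x ^ m)
          ≤ (1 + x ^ (m + 1)) * (1 - x ^ m) := mul_le_mul_of_nonneg_right hrest h1
        _ ≤ 1 := by nlinarith
        _ ≤ max 1 (1 - x ^ m) := le_max_left _ _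
    · rw [hm.neg_pow, sub_neg_eq_add]
      rw [(hm.add_one).neg_pow, max_eq_left (by linarith)] at hrest
      calc (∏ i ∈ range r, (1 - (-x) ^ (m + 1 + i))) * (1 + x ^ m)
          ≤ 1 * (1 + x ^ m) := mul_le_mul_of_nonneg_right hrest (by positivity)
        _ ≤ max 1 (1 + x ^ m) := by rw [one_mul]; exact le_max_right _ _

theorem one_sub_sum_le_prod_one_sub {ι : Type*} (s : Finset ι) (f : ι → ℝ)
    (h0 : ∀ i ∈ s, 0 ≤ f i) (h1 : ∀ i ∈ s, f i ≤ 1) : 1 - ∑ i ∈ s, f i ≤ ∏ i ∈ s, (1 - f i) := by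
  induction s using Finset.induction_on with
  | empty => simp
  | insert a s ha ih =>
    rw [sum_insert ha, prod_insert ha]
    have hs := ih (fun i hi => h0 i (mem_insert_of_mem hi))
      (fun i hi => h1 i (mem_insert_of_mem hi))
    have hsum : 0 ≤ ∑ i ∈ s, f i := sum_nonneg fun i hi => h0 i (mem_insert_of_mem hi)
    have := h0 a (mem_insert_self a s)
    have := h1 a (mem_insert_self a s)
    nlinarith

theorem sum_pow_le_div_one_sub {y : ℝ} (hy0 : 0 ≤ y) (hy1 : y < 1) (s : Finset ℕ) (hs : 0 ∉ s) :
    ∑ j ∈ s, y ^ j ≤ y / (1 - y) := by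
  have h := (summable_geometric_of_lt_one hy0 hy1).sum_le_tsum (insert 0 s)
    (fun j _ => pow_nonneg hy0 j)
  rw [sum_insert hs, tsum_geometric_of_lt_one hy0 hy1, pow_zero] at h
  have : (1 - y)⁻¹ - 1 = y / (1 - y) := by field_simp [(by linarith : 1 - y ≠ 0)]; ring
  linarith

/-- Only the even exponents give factors below `1`; halving them, the deficit is at most
`∑_{j ≥ 1} x^(2j) = x²/(1 - x²) ≤ 1/3`. -/
theorem two_thirds_le_prod_one_sub_neg_pow (hx0 : 0 ≤ x) (hx : x ≤ 1 / 2) (s : Finset ℕ)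
    (hs : 0 ∉ s) : 2 / 3 ≤ ∏ k ∈ s, (1 - (-x) ^ k) := by
  rw [← prod_filter_mul_prod_filter_not s Even]
  have hodd : 1 ≤ ∏ k ∈ s with ¬Even k, (1 - (-x) ^ k) := by
    refine one_le_prod fun k hk => ?_
    rw [(Nat.not_even_iff_odd.mp (mem_filter.mp hk).2).neg_pow]
    linarith [pow_nonneg hx0 k]
  have hhalf : Set.InjOn (· / 2) ↑(s.filter Even) := by
    intro a ha b hb hab
    obtain ⟨a', rfl⟩ := (mem_filter.mp ha).2
    obtain ⟨b', rfl⟩ := (mem_filter.mp hb).2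
    simp only at hab
    omega
  have hsum : ∑ k ∈ s with Even k, x ^ k ≤ 1 / 3 := by
    calc ∑ k ∈ s with Even k, x ^ k = ∑ j ∈ (s.filter Even).image (· / 2), (x ^ 2) ^ j := by
          rw [sum_image hhalf]
          refine sum_congr rfl fun k hk => ?_
          rw [← pow_mul, Nat.mul_div_cancel' (mem_filter.mp hk).2.two_dvd]
      _ ≤ x ^ 2 / (1 - x ^ 2) := by
          refine sum_pow_le_div_one_sub (by positivity) (by nlinarith) _ ?_
          simp only [mem_image, mem_filter, not_exists, not_and]
          rintro k ⟨hk, k', rfl⟩ hk0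
          obtain rfl : k' = 0 := by omega
          exact hs hk
      _ ≤ 1 / 3 := by rw [div_le_iff₀ (by nlinarith)]; nlinarith
  have heven : 2 / 3 ≤ ∏ k ∈ s with Even k, (1 - (-x) ^ k) := by
    rw [prod_congr rfl fun k hk => by rw [(mem_filter.mp hk).2.neg_pow]]
    have := one_sub_sum_le_prod_one_sub (s.filter Even) (x ^ ·) (fun k _ => pow_nonneg hx0 k)
      (fun k _ => pow_le_one₀ hx0 (by linarith))
    linarith
  nlinarith

end NegPowFactors

section AbsNegPowSubOne

variable {q : ℝ}

theorem abs_neg_pow_sub_one (hq : 1 ≤ q) (m : ℕ) :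
    |(-q) ^ m - 1| = q ^ m * (1 - (-q⁻¹) ^ m) := by
  have hq0 : q ≠ 0 := by positivity
  have hfac : (-q) ^ m - 1 = (-q) ^ m * (1 - (-q⁻¹) ^ m) := by
    rw [mul_sub, mul_one, ← mul_pow, neg_mul_neg, mul_inv_cancel₀ hq0, one_pow]
  rw [hfac, abs_mul, abs_pow, abs_neg, abs_of_nonneg (by positivity),
    abs_of_nonneg (one_sub_neg_pow_nonneg (by positivity) (inv_le_one_of_one_le₀ hq) m)]

theorem abs_neg_pow_sub_one_pos (hq : 1 < q) {m : ℕ} (hm : m ≠ 0) : 0 < |(-q) ^ m - 1| := by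
  refine abs_pos.mpr (sub_ne_zero.mpr fun h => ?_)
  have := congrArg abs h
  rw [abs_pow, abs_neg, abs_of_pos (by positivity), abs_one] at this
  exact (one_lt_pow₀ hq hm).ne' this

theorem prod_range_abs_neg_pow_sub_one_lt (hq : 2 ≤ q) {m r e : ℕ} (hm : 2 ≤ m) {β : ℕ → ℕ}
    (hβ0 : ∀ i < r, β i ≠ 0) (hβ : Set.InjOn β (range r))
    (hexp : ∑ i ∈ range r, (m + i) < e + ∑ i ∈ range r, β i) :
    ∏ i ∈ range r, |(-q) ^ (m + i) - 1| < q ^ e * ∏ i ∈ range r, |(-q) ^ β i - 1| := by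
  have hq1 : 1 ≤ q := by linarith
  set x := q⁻¹ with hx
  have hx0 : 0 ≤ x := by positivity
  have hx2 : x ≤ 1 / 2 := by rw [hx, one_div]; exact inv_anti₀ two_pos hq
  simp only [abs_neg_pow_sub_one hq1, prod_mul_distrib, prod_pow_eq_pow_sum, ← mul_assoc,
    ← pow_add]
  have hnum : ∏ i ∈ range r, (1 - (-x) ^ (m + i)) ≤ 5 / 4 := by
    refine (prod_range_one_sub_neg_pow_le_max hx0 (by linarith) m r).trans (max_le (by norm_num) ?_)
    have : |(-x) ^ m| ≤ x ^ 2 := by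
      rw [abs_pow, abs_neg, abs_of_nonneg hx0]
      exact pow_le_pow_of_le_one hx0 (by linarith) hm
    nlinarith [neg_abs_le ((-x) ^ m)]
  have hden : 2 / 3 ≤ ∏ i ∈ range r, (1 - (-x) ^ β i) := by
    rw [← prod_image (f := fun k => 1 - (-x) ^ k) hβ]
    refine two_thirds_le_prod_one_sub_neg_pow hx0 hx2 _ ?_
    simp only [mem_image, mem_range, not_exists, not_and]
    exact fun i hi => hβ0 i hi
  have hpow : q ^ (∑ i ∈ range r, (m + i) + 1) ≤ q ^ (e + ∑ i ∈ range r, β i) :=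
    pow_le_pow_right₀ hq1 hexp
  have hpos : 0 < q ^ ∑ i ∈ range r, (m + i) := by positivity
  calc (q ^ ∑ i ∈ range r, (m + i)) * ∏ i ∈ range r, (1 - (-x) ^ (m + i))
      ≤ (q ^ ∑ i ∈ range r, (m + i)) * (5 / 4) := by gcongr
    _ < q ^ (∑ i ∈ range r, (m + i) + 1) * (2 / 3) := by rw [pow_succ]; nlinarith
    _ ≤ q ^ (e + ∑ i ∈ range r, β i) * ∏ i ∈ range r, (1 - (-x) ^ β i) := by gcongr

end AbsNegPowSubOne

namespace YoungDiagram

variable (μ : YoungDiagram)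

noncomputable def eraseFirstColumn : YoungDiagram where
  cells := μ.cells.preimage (Prod.map id (· + 1))
    (Prod.map_injective.mpr ⟨Function.injective_id, add_left_injective 1⟩).injOn
  isLowerSet a b hba ha := by
    simp only [coe_preimage] at ha ⊢
    exact μ.isLowerSet
      (show (b.1, b.2 + 1) ≤ (a.1, a.2 + 1) from ⟨hba.1, by simpa using hba.2⟩) ha

variable {μ}

@[simp]
theorem mem_eraseFirstColumn {c : ℕ × ℕ} : c ∈ μ.eraseFirstColumn ↔ (c.1, c.2 + 1) ∈ μ := by
  rw [← mem_cells, eraseFirstColumn, mem_mk, mem_preimage, mem_cells]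
  rfl

theorem rowLen_eraseFirstColumn (i : ℕ) : μ.eraseFirstColumn.rowLen i = μ.rowLen i - 1 := by
  have key : ∀ j, j < μ.eraseFirstColumn.rowLen i ↔ j + 1 < μ.rowLen i := fun j => by
    rw [← mem_iff_lt_rowLen, ← mem_iff_lt_rowLen, mem_eraseFirstColumn]
  have := key (μ.eraseFirstColumn.rowLen i)
  have := key (μ.rowLen i - 1)
  omega

theorem colLen_eraseFirstColumn (j : ℕ) : μ.eraseFirstColumn.colLen j = μ.colLen (j + 1) := by
  have key : ∀ i, i < μ.eraseFirstColumn.colLen j ↔ i < μ.colLen (j + 1) := fun i => by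
    rw [← mem_iff_lt_colLen, ← mem_iff_lt_colLen, mem_eraseFirstColumn]
  have := key (μ.eraseFirstColumn.colLen j)
  have := key (μ.colLen (j + 1))
  omega

@[to_additive]
theorem prod_cells_eq_mul {M : Type*} [CommMonoid M] (f : ℕ × ℕ → M) :
    ∏ c ∈ μ.cells, f c =
      (∏ i ∈ range (μ.colLen 0), f (i, 0)) * ∏ c ∈ μ.eraseFirstColumn.cells, f (c.1, c.2 + 1) := by
  rw [← prod_filter_mul_prod_filter_not μ.cells (·.2 = 0)]
  congr 1
  · rw [← col, col_eq_prod, prod_product, prod_congr rfl fun i _ => prod_singleton _ _]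
  · have hshift (c : ℕ × ℕ) (hc : c.2 ≠ 0) : (c.1, c.2 - 1 + 1) = c :=
      Prod.ext rfl (Nat.sub_add_cancel (Nat.one_le_iff_ne_zero.mpr hc))
    refine prod_nbij' (fun c => (c.1, c.2 - 1)) (fun c => (c.1, c.2 + 1)) ?_ ?_ ?_ ?_ ?_ <;>
      simp +contextual [hshift]

theorem card_eq_colLen_add_card_eraseFirstColumn :
    μ.card = μ.colLen 0 + μ.eraseFirstColumn.card := by
  have := μ.sum_cells_eq_add (fun _ => 1)
  simp only [sum_const, card_range, smul_eq_mul, mul_one] at this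
  exact this

theorem cells_eq_of_zero_one_notMem (h : (0, 1) ∉ μ) : μ.cells = range (μ.colLen 0) ×ˢ {0} := by
  rw [← col_eq_prod, col, filter_true_of_mem]
  intro c hc
  by_contra hc0
  exact h (μ.up_left_mem (Nat.zero_le _) (Nat.one_le_iff_ne_zero.mpr hc0) ((mem_cells c).mp hc))

theorem card_eq_colLen_zero_of_zero_one_notMem (h : (0, 1) ∉ μ) : μ.card = μ.colLen 0 := by
  rw [YoungDiagram.card, cells_eq_of_zero_one_notMem h, card_product, card_range, card_singleton,
    mul_one]

end YoungDiagram

open YoungDiagram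

section HookFormula

variable {μ : YoungDiagram}

theorem aStat_eq_sum_range_add_aStat_eraseFirstColumn :
    aStat μ = ∑ i ∈ range (μ.colLen 0), i + aStat μ.eraseFirstColumn :=
  μ.sum_cells_eq_add Prod.fst

theorem hookLength_eq_rowLen_add_colLen {i j : ℕ} (hc : (i, j) ∈ μ) :
    hookLength μ (i, j) = (μ.rowLen i - j) + (μ.colLen j - (i + 1)) := by
  have hhook : μ.cells.filter (fun d => i ≤ d.1 ∧ j ≤ d.2 ∧ (d.1 = i ∨ d.2 = j))
      = ({i} ×ˢ Ico j (μ.rowLen i)) ∪ (Ico (i + 1) (μ.colLen j) ×ˢ {j}) := by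
    ext ⟨a, b⟩
    simp only [mem_filter, mem_union, mem_product, mem_singleton, mem_Ico, mem_cells]
    constructor
    · rintro ⟨hab, hia, hjb, rfl | rfl⟩
      · exact Or.inl ⟨rfl, hjb, mem_iff_lt_rowLen.mp hab⟩
      · rcases hia.eq_or_lt with rfl | hlt
        · exact Or.inl ⟨rfl, hjb, mem_iff_lt_rowLen.mp hab⟩
        · exact Or.inr ⟨⟨hlt, mem_iff_lt_colLen.mp hab⟩, rfl⟩
    · rintro (⟨rfl, hjb, hlt⟩ | ⟨⟨hlt, hcol⟩, rfl⟩)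
      · exact ⟨mem_iff_lt_rowLen.mpr hlt, le_rfl, hjb, Or.inl rfl⟩
      · exact ⟨mem_iff_lt_colLen.mpr hcol, by omega, le_rfl, Or.inr rfl⟩
  rw [hookLength, hhook, card_union_of_disjoint, card_product, card_product]
  · simp
  · rw [disjoint_left]
    rintro ⟨a, b⟩ ha hb
    simp only [mem_product, mem_singleton, mem_Ico] at ha hb
    omega

theorem hookLength_pos {c : ℕ × ℕ} (hc : c ∈ μ) : 0 < hookLength μ c :=
  card_pos.mpr ⟨c, mem_filter.mpr ⟨(mem_cells c).mpr hc, le_rfl, le_rfl, Or.inl rfl⟩⟩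

theorem hookLength_eraseFirstColumn {i j : ℕ} (h : (i, j + 1) ∈ μ) :
    hookLength μ.eraseFirstColumn (i, j) = hookLength μ (i, j + 1) := by
  have h' : (i, j) ∈ μ.eraseFirstColumn := mem_eraseFirstColumn.mpr h
  have := mem_iff_lt_rowLen.mp h
  rw [hookLength_eq_rowLen_add_colLen h, hookLength_eq_rowLen_add_colLen h',
    rowLen_eraseFirstColumn, colLen_eraseFirstColumn]
  omega

theorem Dqminus_eq_mul {q : ℝ} (hq : 0 ≤ q) (μ : YoungDiagram) :
    Dqminus μ q = Dqminus μ.eraseFirstColumn q *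
      ((q ^ ∑ i ∈ range (μ.colLen 0), i) *
        (∏ i ∈ range (μ.colLen 0), |(-q) ^ (μ.eraseFirstColumn.card + i + 1) - 1|) /
          ∏ i ∈ range (μ.colLen 0), |(-q) ^ hookLength μ (i, 0) - 1|) := by
  have hhooks : ∏ c ∈ μ.eraseFirstColumn.cells, ((-q) ^ hookLength μ (c.1, c.2 + 1) - 1) =
      ∏ c ∈ μ.eraseFirstColumn.cells, ((-q) ^ hookLength μ.eraseFirstColumn c - 1) :=
    prod_congr rfl fun c hc => by
      rw [hookLength_eraseFirstColumn (mem_eraseFirstColumn.mp ((mem_cells c).mp hc))]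
  unfold Dqminus
  rw [aStat_eq_sum_range_add_aStat_eraseFirstColumn, card_eq_colLen_add_card_eraseFirstColumn,
    add_comm (μ.colLen 0), prod_range_add, prod_cells_eq_mul, hhooks]
  simp only [abs_div, abs_mul, abs_pow, abs_neg, abs_of_nonneg hq, abs_prod, pow_add]
  ring

theorem strictAntiOn_hookLength_zero :
    StrictAntiOn (fun i => hookLength μ (i, 0)) (Set.Iio (μ.colLen 0)) := by
  intro i hi j hj hij
  simp only [Set.mem_Iio] at hi hj
  show hookLength μ (j, 0) < hookLength μ (i, 0)
  rw [hookLength_eq_rowLen_add_colLen (mem_iff_lt_colLen.mpr hi),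
    hookLength_eq_rowLen_add_colLen (mem_iff_lt_colLen.mpr hj)]
  have := μ.rowLen_anti i j hij.le
  omega

theorem sum_range_add_one_lt_sum_hookLength_zero (h01 : (0, 1) ∈ μ) :
    ∑ i ∈ range (μ.colLen 0), (i + 1) < ∑ i ∈ range (μ.colLen 0), hookLength μ (i, 0) := by
  have hrow0 : 1 < μ.rowLen 0 := mem_iff_lt_rowLen.mp h01
  have hcol0 : 0 < μ.colLen 0 := mem_iff_lt_colLen.mp (μ.up_left_mem le_rfl zero_le_one h01)
  have hhook (i : ℕ) (hi : i < μ.colLen 0) :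
      hookLength μ (i, 0) = μ.rowLen i + (μ.colLen 0 - (i + 1)) := by
    rw [hookLength_eq_rowLen_add_colLen (mem_iff_lt_colLen.mpr hi), Nat.sub_zero]
  rw [← sum_range_reflect]
  refine sum_lt_sum (fun i hi => ?_) ⟨0, mem_range.mpr hcol0, ?_⟩
  · have hi := mem_range.mp hi
    have := mem_iff_lt_rowLen.mp (mem_iff_lt_colLen.mpr hi)
    rw [hhook i hi]
    omega
  · rw [hhook 0 hcol0]
    omega

theorem Dqminus_eq_pow_of_zero_one_notMem {q : ℝ} (hq : 1 < q) (h : (0, 1) ∉ μ) :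
    Dqminus μ q = q ^ ∑ i ∈ range μ.card, i := by
  have hcells := cells_eq_of_zero_one_notMem h
  set r := μ.colLen 0
  have hcard : μ.card = r := card_eq_colLen_zero_of_zero_one_notMem h
  have haStat : aStat μ = ∑ i ∈ range r, i := by
    rw [aStat, hcells, sum_product]
    simp
  have hhook (i : ℕ) (hi : i < r) : hookLength μ (i, 0) = r - i := by
    have hrow : μ.rowLen i = 1 := by
      have h0 := mem_iff_lt_rowLen.mp (mem_iff_lt_colLen.mpr hi)
      have h1 : ¬ 1 < μ.rowLen i := fun h1 =>
        h (μ.up_left_mem (Nat.zero_le i) le_rfl (mem_iff_lt_rowLen.mpr h1))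
      omega
    rw [hookLength_eq_rowLen_add_colLen (mem_iff_lt_colLen.mpr hi), hrow]
    omega
  have hhooks :
      ∏ c ∈ μ.cells, ((-q) ^ hookLength μ c - 1) = ∏ i ∈ range r, ((-q) ^ (i + 1) - 1) := by
    rw [hcells, prod_product, ← prod_range_reflect]
    refine prod_congr rfl fun i hi => ?_
    have hi := mem_range.mp hi
    rw [prod_singleton, hhook _ (by omega)]
    congr 2
    omega
  have hne : ∏ i ∈ range r, ((-q) ^ (i + 1) - 1) ≠ 0 :=
    prod_ne_zero_iff.mpr fun i _ => abs_pos.mp (abs_neg_pow_sub_one_pos hq i.succ_ne_zero)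
  rw [Dqminus, hcard, haStat, hhooks, mul_div_assoc, div_self hne, mul_one, abs_pow, abs_neg,
    abs_of_pos (by positivity)]

theorem Dqminus_lt_of_Dqminus_eraseFirstColumn_le {q : ℝ} (hq : 2 ≤ q) (h01 : (0, 1) ∈ μ)
    (h : Dqminus μ.eraseFirstColumn q ≤ q ^ ∑ i ∈ range μ.eraseFirstColumn.card, i) :
    Dqminus μ q < q ^ ∑ i ∈ range μ.card, i := by
  have hsum := sum_range_add_one_lt_sum_hookLength_zero h01
  set r := μ.colLen 0
  set s := μ.eraseFirstColumn.card
  have hs : 0 < s := card_pos.mpr ⟨(0, 0), (mem_cells _).mpr (mem_eraseFirstColumn.mpr h01)⟩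
  have hexp : ∑ i ∈ range r, (s + 1 + i) < r * s + ∑ i ∈ range r, hookLength μ (i, 0) := by
    have hsplit : ∑ i ∈ range r, (s + 1 + i) = r * s + ∑ i ∈ range r, (i + 1) := by
      rw [← card_range r, ← smul_eq_mul, ← sum_const, card_range, ← sum_add_distrib]
      exact sum_congr rfl fun i _ => by ring
    omega
  have hratio : (∏ i ∈ range r, |(-q) ^ (s + i + 1) - 1|) /
      ∏ i ∈ range r, |(-q) ^ hookLength μ (i, 0) - 1| < q ^ (r * s) := by
    rw [div_lt_iff₀ (prod_pos fun i hi => abs_neg_pow_sub_one_pos (by linarith)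
      (hookLength_pos (mem_iff_lt_colLen.mpr (mem_range.mp hi))).ne')]
    simp only [add_right_comm s _ 1]
    refine prod_range_abs_neg_pow_sub_one_lt hq (m := s + 1) (by omega)
      (fun i hi => (hookLength_pos (mem_iff_lt_colLen.mpr hi)).ne') ?_ hexp
    rw [coe_range]
    exact strictAntiOn_hookLength_zero.injOn
  have htotal : ∑ i ∈ range μ.card, i = ∑ i ∈ range s, i + (∑ i ∈ range r, i + r * s) := by
    rw [card_eq_colLen_add_card_eraseFirstColumn, add_comm, sum_range_add, sum_add_distrib,
      sum_const, card_range, smul_eq_mul]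
    ring
  rw [Dqminus_eq_mul (by positivity), htotal, pow_add, pow_add]
  calc Dqminus μ.eraseFirstColumn q * ((q ^ ∑ i ∈ range r, i) *
        (∏ i ∈ range r, |(-q) ^ (s + i + 1) - 1|) /
          ∏ i ∈ range r, |(-q) ^ hookLength μ (i, 0) - 1|)
      ≤ (q ^ ∑ i ∈ range s, i) * ((q ^ ∑ i ∈ range r, i) *
        (∏ i ∈ range r, |(-q) ^ (s + i + 1) - 1|) /
          ∏ i ∈ range r, |(-q) ^ hookLength μ (i, 0) - 1|) := by
        gcongr
    _ < (q ^ ∑ i ∈ range s, i) * ((q ^ ∑ i ∈ range r, i) * q ^ (r * s)) := by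
        rw [mul_div_assoc]
        gcongr

theorem Dqminus_le {q : ℝ} (hq : 2 ≤ q) (μ : YoungDiagram) :
    Dqminus μ q ≤ q ^ ∑ i ∈ range μ.card, i := by
  induction hn : μ.card using Nat.strong_induction_on generalizing μ with
  | _ n ih =>
  subst hn
  by_cases h01 : (0, 1) ∈ μ
  · have hcol0 : 0 < μ.colLen 0 := mem_iff_lt_colLen.mp (μ.up_left_mem le_rfl zero_le_one h01)
    have hcard := μ.card_eq_colLen_add_card_eraseFirstColumn
    exact (Dqminus_lt_of_Dqminus_eraseFirstColumn_le hq h01 (ih _ (by omega) _ rfl)).le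
  · exact (Dqminus_eq_pow_of_zero_one_notMem (by linarith) h01).le

end HookFormula

theorem stmt6_general (n : ℕ) (q : ℤ) (hq : 2 ≤ q)
    (Y : YoungDiagram) (hY : Y.card = n)
    (hne : Y.cells ≠ (Finset.range n).image fun i => (i, 0)) :
    Dqminus Y (q : ℝ) < (q : ℝ) ^ (n * (n - 1) / 2) := by
  have hq' : (2 : ℝ) ≤ q := by exact_mod_cast hq
  have h01 : (0, 1) ∈ Y := by
    by_contra h
    apply hne
    rw [cells_eq_of_zero_one_notMem h, ← hY, card_eq_colLen_zero_of_zero_one_notMem h,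
      product_singleton, map_eq_image]
    rfl
  rw [← hY, ← sum_range_id]
  exact Dqminus_lt_of_Dqminus_eraseFirstColumn_le hq' h01 (Dqminus_le hq' _)

theorem stmt6 (n : ℕ) (hn : 1 ≤ n) (q : ℤ) (hq : 2 ≤ q)
    (Y : YoungDiagram) (hY : Y.card = n)
    (hne : Y.cells ≠ (Finset.range n).image fun i => (i, 0)) :
    Dqminus Y (q : ℝ) < (q : ℝ) ^ (n * (n - 1) / 2) :=
  stmt6_general n q hq Y hY hne
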